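/- arXiv:2205.07703 — 3 statements merged into one kernel-verified Lean document; each statement's English description precedes it below -/
import Mathlib

section
/- Let g : [0,1] → ℝ be continuous, nondecreasing, and not affine. Then there exist points x, y, z ∈ [0,1] with (½(g(x)+g(y)) − g(z)) · (½(x+y) − z) < 0; consequently, for f(m)(x) = x·g(∫ y dm) on P(𝕋), the measures µ₁ = ½δ_{δ_x} + ½δ_{δ_y} and µ₂ = δ_{δ_z} ∈ P(P(𝕋)) satisfy ∫_{P(𝕋)}∫_𝕋 f̃(µ₁−µ₂)(u) m(du) (µ₁−µ₂)(dm) < 0, so the lifted monotonicity condition fails. -/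
/-!
For `f(m)(u) = u · G(m)` the lifted pairing factorises as
`(∫ mean dµ₁ − ∫ mean dµ₂) · (∫ G dµ₁ − ∫ G dµ₂)`, which for `µ₁ = ½δ_{δ_x} + ½δ_{δ_y}`,
`µ₂ = δ_{δ_z}` and `G = g ∘ mean` is `(½(x+y) − z)(½(g x + g y) − g z)`. Since `g` is not
affine, `½(g x + g y) ≠ g(½(x+y))` for some `x, y`, and continuity lets `z` move slightly off
the midpoint to the side that makes this product negative.
-/

open MeasureTheory

/-- The lifted monotonicity pairing on `P(P(𝕋))` (with `𝕋` identified with `[0,1) ⊂ ℝ`):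
`∫∫ f̃(µ₁ − µ₂)(u) m(du) (µ₁ − µ₂)(dm)` where `f̃(µ)(u) = ∫ f(m')(u) µ(dm')`. -/
noncomputable def pairF (f : Measure ℝ → ℝ → ℝ) (μ₁ μ₂ : Measure (Measure ℝ)) : ℝ :=
  (∫ m, (∫ u, ((∫ m', f m' u ∂μ₁) - ∫ m', f m' u ∂μ₂) ∂m) ∂μ₁)
    - ∫ m, (∫ u, ((∫ m', f m' u ∂μ₁) - ∫ m', f m' u ∂μ₂) ∂m) ∂μ₂

open Filter Set Topology

theorem exists_mem_uIcc_mul_sub_midpoint_neg {g : ℝ → ℝ} {x y : ℝ}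
    (hc : ContinuousOn g (uIcc x y)) (hne : g x + g y ≠ 2 * g ((x + y) / 2)) :
    ∃ z ∈ uIcc x y, ((g x + g y) / 2 - g z) * ((x + y) / 2 - z) < 0 := by
  have hxy : x ≠ y := by
    rintro rfl
    exact hne (by rw [show (x + x) / 2 = x by ring]; ring)
  generalize hm_def : (x + y) / 2 = m at hne ⊢
  have hm : uIcc x y ∈ 𝓝 m := by
    rcases hxy.lt_or_gt with h | h
    · rw [uIcc_of_lt h]; exact Icc_mem_nhds (by linarith) (by linarith)
    · rw [uIcc_of_gt h]; exact Icc_mem_nhds (by linarith) (by linarith)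
  have hg : Tendsto g (𝓝 m) (𝓝 (g m)) := (hc.continuousAt hm).tendsto
  rcases hne.lt_or_gt with h | h
  · have hA : (g x + g y) / 2 < g m := by linarith
    have hev : ∀ᶠ z in 𝓝[<] m, (g x + g y) / 2 < g z ∧ z ∈ uIcc x y ∧ z < m :=
      ((hg.mono_left nhdsWithin_le_nhds).eventually (lt_mem_nhds hA)).and
        (Eventually.and (nhdsWithin_le_nhds hm) self_mem_nhdsWithin)
    obtain ⟨z, hAz, hz, hzm⟩ := hev.exists
    exact ⟨z, hz, mul_neg_of_neg_of_pos (by linarith) (by linarith)⟩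
  · have hA : g m < (g x + g y) / 2 := by linarith
    have hev : ∀ᶠ z in 𝓝[>] m, g z < (g x + g y) / 2 ∧ z ∈ uIcc x y ∧ m < z :=
      ((hg.mono_left nhdsWithin_le_nhds).eventually (gt_mem_nhds hA)).and
        (Eventually.and (nhdsWithin_le_nhds hm) self_mem_nhdsWithin)
    obtain ⟨z, hAz, hz, hzm⟩ := hev.exists
    exact ⟨z, hz, mul_neg_of_pos_of_neg (by linarith) (by linarith)⟩

theorem pairF_mul_left (G : Measure ℝ → ℝ) (μ₁ μ₂ : Measure (Measure ℝ)) :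
    pairF (fun m u => u * G m) μ₁ μ₂
      = (∫ m, (∫ u, u ∂m) ∂μ₁ - ∫ m, (∫ u, u ∂m) ∂μ₂) * (∫ m, G m ∂μ₁ - ∫ m, G m ∂μ₂) := by
  simp only [pairF, integral_const_mul, ← mul_sub, integral_mul_const, ← sub_mul]

theorem integral_half_dirac_add_half_dirac {α : Type*} [MeasurableSpace α] {f : α → ℝ}
    (hf : Measurable f) (a b : α) :
    ∫ v, f v ∂((2 : ENNReal)⁻¹ • Measure.dirac a + (2 : ENNReal)⁻¹ • Measure.dirac b)
      = (f a + f b) / 2 := by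
  have hint : ∀ c, Integrable f (Measure.dirac c) := fun c =>
    integrable_dirac' hf.stronglyMeasurable enorm_lt_top
  rw [integral_add_measure ((hint a).smul_measure (by simp)) ((hint b).smul_measure (by simp)),
    integral_smul_measure, integral_smul_measure, integral_dirac' _ _ hf.stronglyMeasurable,
    integral_dirac' _ _ hf.stronglyMeasurable]
  simp only [ENNReal.toReal_inv, ENNReal.toReal_ofNat, smul_eq_mul]
  ring

theorem stmt8_general (g : ℝ → ℝ)
    (hc : ContinuousOn g (Set.Icc 0 1))
    (hna : ∃ x ∈ Set.Icc (0:ℝ) 1, ∃ y ∈ Set.Icc (0:ℝ) 1, g x + g y ≠ 2 * g ((x + y) / 2))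
    (hI : Measurable fun m : Measure ℝ => ∫ y, y ∂m)
    (hgI : Measurable fun m : Measure ℝ => g (∫ y, y ∂m)) :
    ∃ x ∈ Set.Icc (0:ℝ) 1, ∃ y ∈ Set.Icc (0:ℝ) 1, ∃ z ∈ Set.Icc (0:ℝ) 1,
      ((g x + g y) / 2 - g z) * ((x + y) / 2 - z) < 0 ∧
      pairF (fun m u => u * g (∫ y, y ∂m))
        ((2:ENNReal)⁻¹ • Measure.dirac (Measure.dirac x)
          + (2:ENNReal)⁻¹ • Measure.dirac (Measure.dirac y))
        (Measure.dirac (Measure.dirac z)) < 0 := by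
  obtain ⟨x, hx, y, hy, hne⟩ := hna
  have hsub : uIcc x y ⊆ Icc 0 1 := uIcc_subset_Icc hx hy
  obtain ⟨z, hz, hneg⟩ := exists_mem_uIcc_mul_sub_midpoint_neg (hc.mono hsub) hne
  refine ⟨x, hx, y, hy, z, hsub hz, hneg, ?_⟩
  rw [pairF_mul_left, integral_half_dirac_add_half_dirac hI, integral_half_dirac_add_half_dirac hgI,
    integral_dirac' _ _ hI.stronglyMeasurable, integral_dirac' _ _ hgI.stronglyMeasurable]
  simpa only [integral_dirac, mul_comm] using hneg

/-- If `g : [0,1] → ℝ` is continuous, nondecreasing and not affine, there are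
`x, y, z ∈ [0,1]` with `(½(g(x)+g(y)) − g(z)) (½(x+y) − z) < 0`; consequently, for
`f(m)(u) = u·g(∫ y dm)`, the measures `µ₁ = ½δ_{δ_x} + ½δ_{δ_y}` and `µ₂ = δ_{δ_z}` make the
lifted monotonicity pairing strictly negative, so the lifted monotonicity condition fails. -/
theorem stmt8 (g : ℝ → ℝ)
    (hc : ContinuousOn g (Set.Icc 0 1)) (hmono : MonotoneOn g (Set.Icc 0 1))
    (hna : ∃ x ∈ Set.Icc (0:ℝ) 1, ∃ y ∈ Set.Icc (0:ℝ) 1, g x + g y ≠ 2 * g ((x + y) / 2))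
    (hI : Measurable fun m : Measure ℝ => ∫ y, y ∂m)
    (hgI : Measurable fun m : Measure ℝ => g (∫ y, y ∂m)) :
    ∃ x ∈ Set.Icc (0:ℝ) 1, ∃ y ∈ Set.Icc (0:ℝ) 1, ∃ z ∈ Set.Icc (0:ℝ) 1,
      ((g x + g y) / 2 - g z) * ((x + y) / 2 - z) < 0 ∧
      pairF (fun m u => u * g (∫ y, y ∂m))
        ((2:ENNReal)⁻¹ • Measure.dirac (Measure.dirac x)
          + (2:ENNReal)⁻¹ • Measure.dirac (Measure.dirac y))
        (Measure.dirac (Measure.dirac z)) < 0 :=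
  stmt8_general g hc hna hI hgI
end

section
/- Let f : P(𝕋^d) → C(𝕋^d) be continuous (P(𝕋^d) with the d₁-topology, C(𝕋^d) with uniform norm). Then the set 𝒜 := {µ ∈ P(P(𝕋^d)) : ∃ g ∈ C(𝕋^d), f(m) = g for µ-almost every m} is closed, hence compact, in P(P(𝕋^d)). -/
open MeasureTheory

/-- The `d`-dimensional torus. -/
abbrev Td (d : ℕ) := Fin d → UnitAddCircle

/-!
A measure `μ` on `Y` makes `f : Y → C(K, ℝ)` a.e. equal to a single `g` as soon as, for each
point `x` of a countable dense subset of `K`, the real function `m ↦ f m x` is `μ`-a.e. constant,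
i.e. has zero variance: `∫ (f m x)² dμ = (∫ f m x dμ)²`. For compact `Y` these are integrals of
bounded continuous functions, hence continuous in `μ` for the weak topology, so the set in question
is a countable intersection of closed sets. Compactness then comes from that of `P(P(𝕋^d))`.
-/

open ProbabilityTheory Filter TopologicalSpace BoundedContinuousFunction

section

variable {Ω : Type*} [MeasurableSpace Ω] {μ : Measure Ω} [IsProbabilityMeasure μ] {X : Ω → ℝ}

theorem exists_ae_eq_const_iff_variance_eq_zero (hX : MemLp X 2 μ) :
    (∃ c, ∀ᵐ ω ∂μ, X ω = c) ↔ Var[X; μ] = 0 := by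
  refine ⟨fun ⟨c, hc⟩ => ?_, fun h => ⟨_, ae_eq_integral_of_variance_eq_zero hX h⟩⟩
  have hmean : μ[X] = c := by simp [integral_congr_ae hc]
  rw [variance, (evariance_eq_zero_iff hX.aemeasurable).2 (by rwa [hmean]), ENNReal.toReal_zero]

theorem exists_ae_eq_const_iff_integral_sq (hX : MemLp X 2 μ) :
    (∃ c, ∀ᵐ ω ∂μ, X ω = c) ↔ μ[X ^ 2] = μ[X] ^ 2 := by
  rw [exists_ae_eq_const_iff_variance_eq_zero hX, variance_eq_sub hX, sub_eq_zero]

end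

theorem ProbabilityMeasure.isClosed_setOf_ae_eq_const {Y : Type*} [TopologicalSpace Y]
    [MeasurableSpace Y] [OpensMeasurableSpace Y] (h : Y →ᵇ ℝ) :
    IsClosed {μ : ProbabilityMeasure Y | ∃ c, ∀ᵐ y ∂(μ : Measure Y), h y = c} := by
  have hset : {μ : ProbabilityMeasure Y | ∃ c, ∀ᵐ y ∂(μ : Measure Y), h y = c} =
      {μ : ProbabilityMeasure Y | ∫ y, (h * h) y ∂μ = (∫ y, h y ∂μ) ^ 2} := by
    ext μ
    simp only [Set.mem_ofPred_eq, ← sq]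
    exact exists_ae_eq_const_iff_integral_sq
      (.of_bound h.continuous.aestronglyMeasurable ‖h‖ (.of_forall h.norm_coe_le_norm))
  rw [hset]
  exact isClosed_eq (ProbabilityMeasure.continuous_integral_boundedContinuousFunction _)
    ((ProbabilityMeasure.continuous_integral_boundedContinuousFunction h).pow 2)

theorem exists_ae_eq_iff_forall_mem_dense {Y K Z : Type*} [MeasurableSpace Y] {μ : Measure Y}
    [NeZero μ] [TopologicalSpace K] [TopologicalSpace Z] [T2Space Z] {f : Y → C(K, Z)}
    {D : Set K} (hDc : D.Countable) (hDd : Dense D) :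
    (∃ g, ∀ᵐ m ∂μ, f m = g) ↔ ∀ x ∈ D, ∃ c, ∀ᵐ m ∂μ, f m x = c := by
  refine ⟨fun ⟨g, hg⟩ x _ => ⟨g x, hg.mono fun m hm => by rw [hm]⟩, fun h => ?_⟩
  choose c hc using h
  have hall : ∀ᵐ m ∂μ, ∀ x (hx : x ∈ D), f m x = c x hx := (ae_ball_iff hDc).2 hc
  obtain ⟨m₀, hm₀⟩ := hall.exists
  refine ⟨f m₀, hall.mono fun m hm => ?_⟩
  exact ContinuousMap.coe_injective <| (f m).continuous.ext_on hDd (f m₀).continuous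
    fun x hx => (hm x hx).trans (hm₀ x hx).symm

theorem ProbabilityMeasure.isClosed_setOf_ae_eq_continuousMap {Y K : Type*} [TopologicalSpace Y]
    [CompactSpace Y] [MeasurableSpace Y] [OpensMeasurableSpace Y] [TopologicalSpace K]
    [SeparableSpace K] {f : Y → C(K, ℝ)} (hf : Continuous f) :
    IsClosed {μ : ProbabilityMeasure Y | ∃ g, ∀ᵐ m ∂(μ : Measure Y), f m = g} := by
  obtain ⟨D, hDc, hDd⟩ := exists_countable_dense K
  have hset : {μ : ProbabilityMeasure Y | ∃ g, ∀ᵐ m ∂(μ : Measure Y), f m = g} =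
      ⋂ x ∈ D, {μ : ProbabilityMeasure Y | ∃ c, ∀ᵐ m ∂(μ : Measure Y), f m x = c} := by
    ext μ
    simp only [Set.mem_ofPred_eq, Set.mem_iInter]
    exact exists_ae_eq_iff_forall_mem_dense hDc hDd
  rw [hset]
  exact isClosed_biInter fun x _ => isClosed_setOf_ae_eq_const
    (mkOfCompact ⟨fun m => f m x, (continuous_eval_const x).comp hf⟩)

/-- For a continuous `f : P(𝕋^d) → C(𝕋^d)`, the set
`𝒜 = {µ ∈ P(P(𝕋^d)) : ∃ g ∈ C(𝕋^d), f(m) = g for µ-a.e. m}` is closed, hence compact,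
in `P(P(𝕋^d))` (with its weak topology, the one of the Kantorovich–Rubinstein distance). -/
theorem stmt9 {d : ℕ} (f : ProbabilityMeasure (Td d) → C(Td d, ℝ)) (hf : Continuous f) :
    letI : MeasurableSpace (ProbabilityMeasure (Td d)) := borel _
    haveI : BorelSpace (ProbabilityMeasure (Td d)) := ⟨rfl⟩
    IsClosed {μ : ProbabilityMeasure (ProbabilityMeasure (Td d)) |
        ∃ g : C(Td d, ℝ), ∀ᵐ m ∂(μ : Measure (ProbabilityMeasure (Td d))), f m = g} ∧
      IsCompact {μ : ProbabilityMeasure (ProbabilityMeasure (Td d)) |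
        ∃ g : C(Td d, ℝ), ∀ᵐ m ∂(μ : Measure (ProbabilityMeasure (Td d))), f m = g} := by
  let _ : MeasurableSpace (ProbabilityMeasure (Td d)) := borel _
  have _ : BorelSpace (ProbabilityMeasure (Td d)) := ⟨rfl⟩
  -- without this intermediate instance, instance search fails to find that `P(P(𝕋^d))` is compact
  have _ : CompactSpace (ProbabilityMeasure (Td d)) := inferInstance
  have hclosed := ProbabilityMeasure.isClosed_setOf_ae_eq_continuousMap hf
  exact ⟨hclosed, hclosed.isCompact⟩
end

section
/- Let A be a subset of P(P(𝕋^d)) and U, V : A → C(𝕋^d) be continuous maps such that ⟨U(µ) − V(ν), µ − ν⟩ ≥ 0 for all µ, ν ∈ A, where ⟨φ, µ⟩ := ∫_{P(𝕋^d)} ∫_{𝕋^d} φ(x) m(dx) µ(dm). Suppose µ̄ ∈ A and m₁, m₂ ∈ P(𝕋^d) are such that (1−θ)µ̄ + θδ_{m₁} ∈ A and (1−θ)µ̄ + θδ_{m₂} ∈ A for all θ ∈ (0,1). Then ∫_{𝕋^d} (U(µ̄)(x) − V(µ̄)(x)) (m₁ − m₂)(dx) = 0. -/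
/-!
Perturb `µ̄` towards the point masses: `µᵢ(θ) = (1 - θ) µ̄ + θ δ_{mᵢ}`. For every `φ`,
`⟨φ, µ₁(θ)⟩ - ⟨φ, µ₂(θ)⟩ = θ ∫ φ d(m₁ - m₂)`, so monotonicity applied to the pair
`(µ₁(θ), µ₂(θ))` and divided by `θ > 0` gives `∫ (U(µ₁(θ)) - V(µ₂(θ))) d(m₁ - m₂) ≥ 0`.
As `θ ↓ 0`, `µᵢ(θ) → µ̄` weakly, so continuity of `U`, `V` and of integration against `mᵢ`
in the uniform norm yield `∫ (U(µ̄) - V(µ̄)) d(m₁ - m₂) ≥ 0`; exchanging `m₁` and `m₂` gives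
equality.
-/

open MeasureTheory

open Filter Topology BoundedContinuousFunction unitInterval

namespace MeasureTheory.ProbabilityMeasure

variable {Y : Type*} [MeasurableSpace Y]

noncomputable def mixDirac (μ : ProbabilityMeasure Y) (y : Y) (θ : I) : ProbabilityMeasure Y :=
  ⟨ENNReal.ofReal (1 - θ) • (μ : Measure Y) + ENNReal.ofReal θ • Measure.dirac y, by
    constructor
    simp only [Measure.add_apply, Measure.smul_apply, smul_eq_mul, measure_univ, mul_one]
    rw [← ENNReal.ofReal_add (one_minus_nonneg θ) θ.2.1, sub_add_cancel, ENNReal.ofReal_one]⟩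

variable (μ : ProbabilityMeasure Y) (y : Y)

lemma toMeasure_mixDirac (θ : I) :
    (mixDirac μ y θ : Measure Y)
      = ENNReal.ofReal (1 - θ) • (μ : Measure Y) + ENNReal.ofReal θ • Measure.dirac y :=
  rfl

@[simp]
lemma mixDirac_zero : mixDirac μ y 0 = μ :=
  toMeasure_injective <| by simp [toMeasure_mixDirac]

lemma eventually_mixDirac_mem {A : Set (ProbabilityMeasure Y)}
    (hA : ∀ θ : ℝ, θ ∈ Set.Ioo (0 : ℝ) 1 → ∀ μθ : ProbabilityMeasure Y,
      (μθ : Measure Y)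
          = ENNReal.ofReal (1 - θ) • (μ : Measure Y) + ENNReal.ofReal θ • Measure.dirac y →
        μθ ∈ A) :
    ∀ᶠ θ in 𝓝[>] (0 : I), mixDirac μ y θ ∈ A := by
  filter_upwards [Ioo_mem_nhdsGT zero_lt_one] with θ hθ
  exact hA θ hθ _ (toMeasure_mixDirac μ y θ)

variable [TopologicalSpace Y] [OpensMeasurableSpace Y]

lemma integral_mixDirac (f : Y →ᵇ ℝ) (θ : I) :
    ∫ z, f z ∂(mixDirac μ y θ : Measure Y) = (1 - θ) * ∫ z, f z ∂(μ : Measure Y) + θ * f y := by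
  rw [toMeasure_mixDirac, integral_add_measure ((f.integrable _).smul_measure ENNReal.ofReal_ne_top)
    ((f.integrable _).smul_measure ENNReal.ofReal_ne_top), integral_smul_measure,
    integral_smul_measure, integral_dirac' _ _ f.continuous.stronglyMeasurable,
    ENNReal.toReal_ofReal (one_minus_nonneg θ), ENNReal.toReal_ofReal θ.2.1, smul_eq_mul,
    smul_eq_mul]

lemma continuous_mixDirac : Continuous (mixDirac μ y) := by
  refine continuous_iff_forall_continuous_integral.2 fun f => ?_
  simp only [integral_mixDirac]
  fun_prop

end MeasureTheory.ProbabilityMeasure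

namespace MeasureTheory

open ProbabilityMeasure

variable {X : Type*} [TopologicalSpace X] [CompactSpace X] [MeasurableSpace X]
  [OpensMeasurableSpace X]

lemma lipschitzWith_integral_continuousMap (m : Measure X) [IsProbabilityMeasure m] :
    LipschitzWith 1 fun φ : C(X, ℝ) => ∫ x, φ x ∂m := by
  refine LipschitzWith.of_dist_le_mul fun φ ψ => ?_
  have hφ : Integrable (fun x => φ x) m := (mkOfCompact φ).integrable m
  have hψ : Integrable (fun x => ψ x) m := (mkOfCompact ψ).integrable m
  rw [NNReal.coe_one, one_mul, dist_eq_norm, dist_eq_norm, ← norm_mkOfCompact,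
    ← integral_sub hφ hψ]
  exact (mkOfCompact (φ - ψ)).norm_integral_le_norm m

noncomputable def _root_.ContinuousMap.integralAgainst (φ : C(X, ℝ)) :
    ProbabilityMeasure X →ᵇ ℝ :=
  ofNormedAddCommGroup (fun m => ∫ x, φ x ∂(m : Measure X))
    (continuous_integral_continuousMap φ) ‖φ‖ fun m => by
      simpa [norm_mkOfCompact] using (mkOfCompact φ).norm_integral_le_norm (m : Measure X)

variable [MeasurableSpace (ProbabilityMeasure X)]

noncomputable def pairing (φ : C(X, ℝ)) (μ : ProbabilityMeasure (ProbabilityMeasure X)) : ℝ :=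
  ∫ m, ∫ x, φ x ∂(m : Measure X) ∂(μ : Measure (ProbabilityMeasure X))

variable [OpensMeasurableSpace (ProbabilityMeasure X)]

lemma pairing_mixDirac_sub_pairing_mixDirac (φ : C(X, ℝ))
    (μ : ProbabilityMeasure (ProbabilityMeasure X)) (m₁ m₂ : ProbabilityMeasure X) (θ : I) :
    pairing φ (mixDirac μ m₁ θ) - pairing φ (mixDirac μ m₂ θ)
      = θ * (∫ x, φ x ∂(m₁ : Measure X) - ∫ x, φ x ∂(m₂ : Measure X)) := by
  have hmix : ∀ m, pairing φ (mixDirac μ m θ)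
      = (1 - θ) * pairing φ μ + θ * ∫ x, φ x ∂(m : Measure X) :=
    fun m => integral_mixDirac μ m φ.integralAgainst θ
  rw [hmix, hmix]
  ring

lemma integral_sub_integral_nonneg_of_monotone
    {A : Set (ProbabilityMeasure (ProbabilityMeasure X))}
    {U V : ProbabilityMeasure (ProbabilityMeasure X) → C(X, ℝ)}
    (hmono : ∀ μ ∈ A, ∀ ν ∈ A, 0 ≤ pairing (U μ - V ν) μ - pairing (U μ - V ν) ν)
    {μbar : ProbabilityMeasure (ProbabilityMeasure X)}
    (hU : ContinuousWithinAt U A μbar) (hV : ContinuousWithinAt V A μbar)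
    {m₁ m₂ : ProbabilityMeasure X}
    (h₁ : ∀ᶠ θ in 𝓝[>] (0 : I), mixDirac μbar m₁ θ ∈ A)
    (h₂ : ∀ᶠ θ in 𝓝[>] (0 : I), mixDirac μbar m₂ θ ∈ A) :
    0 ≤ ∫ x, (U μbar x - V μbar x) ∂(m₁ : Measure X)
      - ∫ x, (U μbar x - V μbar x) ∂(m₂ : Measure X) := by
  have : (𝓝[>] (0 : I)).NeBot := nhdsGT_neBot_of_exists_gt ⟨1, zero_lt_one⟩
  have hmix : ∀ m, (∀ᶠ θ in 𝓝[>] (0 : I), mixDirac μbar m θ ∈ A) →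
      Tendsto (mixDirac μbar m) (𝓝[>] 0) (𝓝[A] μbar) := fun m hA =>
    tendsto_nhdsWithin_iff.2
      ⟨((continuous_mixDirac μbar m).tendsto' 0 μbar (mixDirac_zero μbar m)).mono_left
        nhdsWithin_le_nhds, hA⟩
  have hφ : Tendsto (fun θ => U (mixDirac μbar m₁ θ) - V (mixDirac μbar m₂ θ)) (𝓝[>] 0)
      (𝓝 (U μbar - V μbar)) :=
    (hU.tendsto.comp (hmix m₁ h₁)).sub (hV.tendsto.comp (hmix m₂ h₂))
  have hint : ∀ m : ProbabilityMeasure X, Tendsto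
      (fun θ => ∫ x, (U (mixDirac μbar m₁ θ) - V (mixDirac μbar m₂ θ)) x ∂(m : Measure X))
      (𝓝[>] 0) (𝓝 (∫ x, (U μbar - V μbar) x ∂(m : Measure X))) := fun m =>
    ((lipschitzWith_integral_continuousMap (m : Measure X)).continuous.tendsto _).comp hφ
  refine ge_of_tendsto ((hint m₁).sub (hint m₂)) ?_
  filter_upwards [h₁, h₂, self_mem_nhdsWithin] with θ hθ₁ hθ₂ (hθ : 0 < θ)
  have hpos := hmono _ hθ₁ _ hθ₂
  rw [pairing_mixDirac_sub_pairing_mixDirac] at hpos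
  exact nonneg_of_mul_nonneg_right hpos hθ

end MeasureTheory

open ProbabilityMeasure

/-- Let `A ⊆ P(P(𝕋^d))` and `U, V : A → C(𝕋^d)` be continuous with
`⟨U(µ) − V(ν), µ − ν⟩ ≥ 0` on `A`, where `⟨φ, µ⟩ = ∫∫ φ(x) m(dx) µ(dm)`.  If `µ̄ ∈ A` and
`m₁, m₂ ∈ P(𝕋^d)` are such that `(1−θ)µ̄ + θδ_{mᵢ} ∈ A` for all `θ ∈ (0,1)`, then
`∫ (U(µ̄) − V(µ̄)) d(m₁ − m₂) = 0`. -/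
theorem stmt13 {d : ℕ} :
    letI : MeasurableSpace (ProbabilityMeasure (Td d)) := borel _
    haveI : BorelSpace (ProbabilityMeasure (Td d)) := ⟨rfl⟩
    ∀ (A : Set (ProbabilityMeasure (ProbabilityMeasure (Td d))))
      (U V : ProbabilityMeasure (ProbabilityMeasure (Td d)) → C(Td d, ℝ)),
      ContinuousOn U A → ContinuousOn V A →
      (∀ μ ∈ A, ∀ ν ∈ A,
        0 ≤ (∫ m, (∫ x, (U μ x - V ν x) ∂(m : Measure (Td d)))
                ∂(μ : Measure (ProbabilityMeasure (Td d))))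
            - ∫ m, (∫ x, (U μ x - V ν x) ∂(m : Measure (Td d)))
                ∂(ν : Measure (ProbabilityMeasure (Td d)))) →
      ∀ μbar ∈ A, ∀ m₁ m₂ : ProbabilityMeasure (Td d),
        (∀ θ : ℝ, θ ∈ Set.Ioo (0:ℝ) 1 →
          ∀ μθ : ProbabilityMeasure (ProbabilityMeasure (Td d)),
            (μθ : Measure (ProbabilityMeasure (Td d)))
              = ENNReal.ofReal (1 - θ) • (μbar : Measure (ProbabilityMeasure (Td d)))
                + ENNReal.ofReal θ • Measure.dirac m₁ → μθ ∈ A) →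
        (∀ θ : ℝ, θ ∈ Set.Ioo (0:ℝ) 1 →
          ∀ μθ : ProbabilityMeasure (ProbabilityMeasure (Td d)),
            (μθ : Measure (ProbabilityMeasure (Td d)))
              = ENNReal.ofReal (1 - θ) • (μbar : Measure (ProbabilityMeasure (Td d)))
                + ENNReal.ofReal θ • Measure.dirac m₂ → μθ ∈ A) →
        (∫ x, (U μbar x - V μbar x) ∂(m₁ : Measure (Td d)))
          - (∫ x, (U μbar x - V μbar x) ∂(m₂ : Measure (Td d))) = 0 := by
  intro A U V hU hV hmono μbar hμbar m₁ m₂ h₁ h₂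
  borelize (ProbabilityMeasure (Td d))
  have key₁ := integral_sub_integral_nonneg_of_monotone hmono (hU μbar hμbar) (hV μbar hμbar)
    (eventually_mixDirac_mem μbar m₁ h₁) (eventually_mixDirac_mem μbar m₂ h₂)
  have key₂ := integral_sub_integral_nonneg_of_monotone hmono (hU μbar hμbar) (hV μbar hμbar)
    (eventually_mixDirac_mem μbar m₂ h₂) (eventually_mixDirac_mem μbar m₁ h₁)
  linarith
end
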